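/- Let Λ be a measurable space with a probability measure μ, let X be any type, let A, B : S² → Λ → X be functions (S² the unit sphere in ℝ³), and let P : S² → X → ℝ be a family of projection maps such that for every unit vector n and every x : X, P n x ∈ {-1, 1}, and for every unit vector n the maps λ ↦ P n (A n λ) and λ ↦ P n (B n λ) are measurable. Then for all unit vectors a, a', b, b' in ℝ³, |∫ P a (A a λ) · P b (B b λ) dμ(λ) − ∫ P a (A a λ) · P b' (B b' λ) dμ(λ) + ∫ P a' (A a' λ) · P b (B b λ) dμ(λ) + ∫ P a' (A a' λ) · P b' (B b' λ) dμ(λ)| ≤ 2. -/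

import Mathlib

open MeasureTheory

theorem abs_chsh_le_two {x x' y y' : ℝ} (hx : |x| ≤ 1) (hx' : |x'| ≤ 1) (hy : |y| ≤ 1)
    (hy' : |y'| ≤ 1) : |x * y - x * y' + x' * y + x' * y'| ≤ 2 :=
  calc |x * y - x * y' + x' * y + x' * y'| = |x * (y - y') + x' * (y + y')| := by ring_nf
    _ ≤ |x| * |y - y'| + |x'| * |y + y'| := by
      rw [← abs_mul, ← abs_mul]; exact abs_add_le _ _
    _ ≤ |y - y'| + |y + y'| := by
      gcongr <;> apply mul_le_of_le_one_left (abs_nonneg _) <;> assumption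
    _ ≤ 2 := by
      -- `|y - y'| + |y + y'| = 2 max |y| |y'|`
      rw [abs_le] at hy hy'
      cases abs_cases (y - y') <;> cases abs_cases (y + y') <;> linarith

section CHSH

variable {Ω : Type*} [MeasurableSpace Ω] {μ : Measure Ω}

theorem integrable_mul_of_abs_le_one [IsFiniteMeasure μ] {f g : Ω → ℝ} (hf : AEStronglyMeasurable f μ)
    (hg : AEStronglyMeasurable g μ) (hf1 : ∀ᵐ ω ∂μ, |f ω| ≤ 1) (hg1 : ∀ᵐ ω ∂μ, |g ω| ≤ 1) :
    Integrable (fun ω => f ω * g ω) μ :=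
  Integrable.of_bound (hf.mul hg) 1 <| by
    filter_upwards [hf1, hg1] with ω hfω hgω
    rw [Real.norm_eq_abs, abs_mul]
    exact mul_le_one₀ hfω (abs_nonneg _) hgω

theorem abs_integral_chsh_le_two [IsProbabilityMeasure μ] {f f' g g' : Ω → ℝ}
    (hf : AEStronglyMeasurable f μ) (hf' : AEStronglyMeasurable f' μ)
    (hg : AEStronglyMeasurable g μ) (hg' : AEStronglyMeasurable g' μ)
    (hf1 : ∀ᵐ ω ∂μ, |f ω| ≤ 1) (hf'1 : ∀ᵐ ω ∂μ, |f' ω| ≤ 1)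
    (hg1 : ∀ᵐ ω ∂μ, |g ω| ≤ 1) (hg'1 : ∀ᵐ ω ∂μ, |g' ω| ≤ 1) :
    |(∫ ω, f ω * g ω ∂μ) - (∫ ω, f ω * g' ω ∂μ) + (∫ ω, f' ω * g ω ∂μ)
      + (∫ ω, f' ω * g' ω ∂μ)| ≤ 2 := by
  have hfg := integrable_mul_of_abs_le_one hf hg hf1 hg1
  have hfg' := integrable_mul_of_abs_le_one hf hg' hf1 hg'1
  have hf'g := integrable_mul_of_abs_le_one hf' hg hf'1 hg1
  have hf'g' := integrable_mul_of_abs_le_one hf' hg' hf'1 hg'1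
  have h_sum : ∫ ω, (f ω * g ω - f ω * g' ω + f' ω * g ω + f' ω * g' ω) ∂μ
      = (∫ ω, f ω * g ω ∂μ) - (∫ ω, f ω * g' ω ∂μ) + (∫ ω, f' ω * g ω ∂μ)
        + (∫ ω, f' ω * g' ω ∂μ) := by
    rw [integral_add, integral_add, integral_sub] <;> fun_prop
  have h_pointwise : ∀ᵐ ω ∂μ,
      ‖f ω * g ω - f ω * g' ω + f' ω * g ω + f' ω * g' ω‖ ≤ 2 := by
    filter_upwards [hf1, hf'1, hg1, hg'1] with ω h₁ h₂ h₃ h₄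
    exact abs_chsh_le_two h₁ h₂ h₃ h₄
  rw [← h_sum, ← Real.norm_eq_abs]
  simpa using norm_integral_le_of_norm_le_const h_pointwise

end CHSH

/-- CHSH for generalized hidden variable models: any local, deterministic
generalized hidden variable model `(Λ, X, A, B, μ, P)` of the EPR-Bohm
experiment, with `X`-valued observables `A, B` and projection maps
`P_n : X → {-1, 1}`, satisfies the CHSH inequality for the projected
product expectation values. -/
theorem chsh_generalized {Λ : Type*} [MeasurableSpace Λ] (μ : Measure Λ)
    [IsProbabilityMeasure μ] {X : Type*}
    (A B : EuclideanSpace ℝ (Fin 3) → Λ → X)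
    (P : EuclideanSpace ℝ (Fin 3) → X → ℝ)
    (hPval : ∀ n : EuclideanSpace ℝ (Fin 3), ‖n‖ = 1 → ∀ x : X, P n x ∈ ({-1, 1} : Set ℝ))
    (hAmeas : ∀ n : EuclideanSpace ℝ (Fin 3), ‖n‖ = 1 → Measurable (fun l => P n (A n l)))
    (hBmeas : ∀ n : EuclideanSpace ℝ (Fin 3), ‖n‖ = 1 → Measurable (fun l => P n (B n l))) :
    ∀ a a' b b' : EuclideanSpace ℝ (Fin 3),
      ‖a‖ = 1 → ‖a'‖ = 1 → ‖b‖ = 1 → ‖b'‖ = 1 →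
      |(∫ l, P a (A a l) * P b (B b l) ∂μ) - (∫ l, P a (A a l) * P b' (B b' l) ∂μ)
        + (∫ l, P a' (A a' l) * P b (B b l) ∂μ)
        + (∫ l, P a' (A a' l) * P b' (B b' l) ∂μ)| ≤ 2 := by
  intro a a' b b' ha ha' hb hb'
  have hP_abs_le : ∀ n, ‖n‖ = 1 → ∀ x, |P n x| ≤ 1 := fun n hn x => by
    obtain h | h : P n x = -1 ∨ P n x = 1 := hPval n hn x <;> simp [h]
  exact abs_integral_chsh_le_two (hAmeas a ha).aestronglyMeasurable
    (hAmeas a' ha').aestronglyMeasurable (hBmeas b hb).aestronglyMeasurable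
    (hBmeas b' hb').aestronglyMeasurable
    (.of_forall fun _ => hP_abs_le a ha _) (.of_forall fun _ => hP_abs_le a' ha' _)
    (.of_forall fun _ => hP_abs_le b hb _) (.of_forall fun _ => hP_abs_le b' hb' _)
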